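/- For a, r in (0,1): F(1+a,2−a;2;1−r)·F(a,1−a;1;r) + F(1+a,2−a;2;r)·F(a,1−a;1;1−r) = sin(πa)/(π·a·(1−a)·r·(1−r)). -/

import Mathlib

noncomputable def GaussF (a b c x : ℝ) : ℝ :=
  ∑' n : ℕ, ((ascPochhammer ℝ n).eval a * (ascPochhammer ℝ n).eval b /
    ((ascPochhammer ℝ n).eval c * n.factorial)) * x ^ n

/-!
Write `F(x) = F(a, 1 - a; 1; x)` and `G(x) = F(1 + a, 2 - a; 2; x)`, so that
`F' = a (1 - a) G`. The hypergeometric equation of `F` takes the self-adjoint form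
`(x (1 - x) G(x))' = F(x)` and is invariant under `x ↦ 1 - x`, so
`W(x) = x (1 - x) (G(1 - x) F(x) + G(x) F(1 - x))` has derivative zero on `(0, 1)`.
Its value is read off as `x → 0⁺`: by Abel's theorem `(1 - x) F(x) → 0` and
`a (1 - a) (1 - x) G(x) → lim (n + 1) c_{n + 1}`, where `c_n` are the coefficients of `F`, and
Euler's limit formula for `Γ` with the reflection formula give
`lim (n + 1) c_{n + 1} = 1 / (Γ(a) Γ(1 - a)) = sin (π a) / π`.
-/

open Filter Topology Finset Asymptotics Real

section PowerSeries

variable {b : ℕ → ℝ} {x : ℝ}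

theorem tsum_mul_pow_eq_add_mul_tsum_succ (hs : Summable fun n => b n * x ^ n) :
    ∑' n, b n * x ^ n = b 0 + x * ∑' n, b (n + 1) * x ^ n := by
  rw [hs.tsum_eq_zero_add, ← tsum_mul_left, pow_zero, mul_one]
  congr 1
  exact tsum_congr fun n => by ring

theorem summable_succ_mul_mul_pow (hb : ∀ y, |y| < 1 → Summable fun n => b n * y ^ n)
    (hx : |x| < 1) : Summable fun n => (n + 1) * b (n + 1) * x ^ n := by
  obtain ⟨R, hxR, hR1⟩ := exists_between hx
  have hR : 0 < R := (abs_nonneg x).trans_lt hxR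
  have hq : ‖x / R‖ < 1 := by
    rwa [norm_div, Real.norm_eq_abs, Real.norm_eq_abs, abs_of_pos hR, div_lt_one hR]
  have hg : Summable fun n : ℕ => ((n : ℝ) + 1) * (x / R) ^ n := by
    simpa [add_mul] using
      (summable_pow_mul_geometric_of_norm_lt_one 1 hq).add (summable_geometric_of_norm_lt_one hq)
  have hbR : (fun n => b (n + 1) * R ^ (n + 1)) =O[atTop] fun _ => (1 : ℝ) :=
    ((summable_nat_add_iff 1).2 (hb R (by rwa [abs_of_pos hR]))).tendsto_atTop_zero.isBigO_one ℝ
  have key :=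
    (hbR.mul (isBigO_refl (fun n : ℕ => ((n : ℝ) + 1) * (x / R) ^ n) atTop)).const_mul_left R⁻¹
  simp only [one_mul] at key
  refine summable_of_isBigO_nat' hg (key.congr_left fun n => ?_)
  rw [div_pow, pow_succ]
  field_simp

theorem summable_natCast_mul_mul_pow (hb : ∀ y, |y| < 1 → Summable fun n => b n * y ^ n)
    (hx : |x| < 1) : Summable fun n => n * b n * x ^ n := by
  refine (summable_nat_add_iff 1).1
    (((summable_succ_mul_mul_pow hb hx).mul_right x).congr fun n => ?_)
  push_cast
  ring

theorem hasDerivAt_tsum_mul_pow (hb : ∀ y, |y| < 1 → Summable fun n => b n * y ^ n)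
    (hx : |x| < 1) :
    HasDerivAt (fun y => ∑' n, b n * y ^ n) (∑' n, (n + 1) * b (n + 1) * x ^ n) x := by
  obtain ⟨ρ, hxρ, hρ1⟩ := exists_between hx
  have hρ : 0 < ρ := (abs_nonneg x).trans_lt hxρ
  have hx' : x ∈ Metric.ball 0 ρ := by rwa [Metric.mem_ball, Real.dist_0_eq_abs]
  have hu : Summable fun n : ℕ => |n * b n| * ρ ^ (n - 1) := by
    refine (summable_nat_add_iff 1).1 ((summable_succ_mul_mul_pow hb (x := ρ)
      (by rwa [abs_of_pos hρ])).abs.congr fun n => ?_)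
    push_cast
    rw [abs_mul, abs_of_pos (pow_pos hρ n)]
  have h := hasDerivAt_tsum_of_isPreconnected hu Metric.isOpen_ball
    (convex_ball 0 ρ).isPreconnected (fun n y _ => (hasDerivAt_pow n y).const_mul (b n))
    (fun n y hy => ?_) hx' (hb x hx) hx'
  · have hs : Summable fun n => b n * (n * x ^ (n - 1)) :=
      (summable_nat_add_iff 1).1 ((summable_succ_mul_mul_pow hb hx).congr fun n => by
        push_cast; ring_nf)
    refine h.congr_deriv ?_
    rw [hs.tsum_eq_zero_add, Nat.cast_zero, zero_mul, mul_zero, zero_add]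
    exact tsum_congr fun n => by push_cast; ring_nf
  · rw [Metric.mem_ball, Real.dist_0_eq_abs] at hy
    rw [Real.norm_eq_abs, mul_left_comm, ← mul_assoc, abs_mul, abs_pow]
    gcongr

theorem tendsto_one_sub_mul_tsum_mul_pow {L : ℝ} (hb : Tendsto b atTop (𝓝 L))
    (hs : ∀ y, |y| < 1 → Summable fun n => b n * y ^ n) :
    Tendsto (fun x => (1 - x) * ∑' n, b n * x ^ n) (𝓝[<] 1) (𝓝 L) := by
  -- Abel's theorem, applied to the differences of `b` shifted by one, whose partial sums are `b`.
  let b' : ℕ → ℝ := fun | 0 => 0 | n + 1 => b n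
  have hpartial : Tendsto (fun n => ∑ i ∈ range n, (b' (i + 1) - b' i)) atTop (𝓝 L) := by
    simp_rw [sum_range_sub]
    exact (tendsto_add_atTop_iff_nat 1).1 (by simpa [b'] using hb)
  refine (Real.tendsto_tsum_powerSeries_nhdsWithin_lt hpartial).congr' ?_
  filter_upwards [Ioo_mem_nhdsLT (show (-1 : ℝ) < 1 by norm_num)] with y hy
  have hy : |y| < 1 := abs_lt.2 hy
  have hs' : Summable fun n => b' n * y ^ n :=
    (summable_nat_add_iff 1).1 (((hs y hy).mul_left y).congr fun n => by
      simp only [b', pow_succ]; ring)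
  simp_rw [sub_mul]
  rw [(hs y hy).tsum_sub hs', tsum_mul_pow_eq_add_mul_tsum_succ hs']
  simp [b']

end PowerSeries

section Hypergeometric

theorem ascPochhammer_eval_succ_left {R : Type*} [CommSemiring R] (n : ℕ) (r : R) :
    (ascPochhammer R (n + 1)).eval r = r * (ascPochhammer R n).eval (r + 1) := by
  simp [ascPochhammer_succ_left]

theorem ascPochhammer_eval_eq_prod_range {R : Type*} [CommSemiring R] (n : ℕ) (r : R) :
    (ascPochhammer R n).eval r = ∏ j ∈ range n, (r + j) := by
  induction n with
  | zero => simp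
  | succ n ih => rw [ascPochhammer_succ_eval, ih, prod_range_succ]

noncomputable def gaussCoeff (a b c : ℝ) (n : ℕ) : ℝ :=
  (ascPochhammer ℝ n).eval a * (ascPochhammer ℝ n).eval b /
    ((ascPochhammer ℝ n).eval c * n.factorial)

variable {a b c x : ℝ}

theorem GaussF_eq_tsum : GaussF a b c x = ∑' n, gaussCoeff a b c n * x ^ n := rfl

theorem GaussF_zero : GaussF a b c 0 = 1 := by
  rw [GaussF_eq_tsum, tsum_eq_single 0 fun n hn => by simp [hn]]
  simp [gaussCoeff]

theorem gaussCoeff_succ (a b c : ℝ) (n : ℕ) :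
    gaussCoeff a b c (n + 1) =
      (a + n) * (b + n) / ((c + n) * (n + 1)) * gaussCoeff a b c n := by
  simp only [gaussCoeff, ascPochhammer_succ_eval, Nat.factorial_succ, Nat.cast_mul, Nat.cast_succ,
    div_eq_mul_inv, mul_inv]
  ring

theorem succ_mul_gaussCoeff_succ (a b c : ℝ) (n : ℕ) :
    (n + 1) * gaussCoeff a b c (n + 1) = a * b / c * gaussCoeff (a + 1) (b + 1) (c + 1) n := by
  simp only [gaussCoeff, ascPochhammer_eval_succ_left, Nat.factorial_succ, Nat.cast_mul,
    Nat.cast_succ, div_eq_mul_inv, mul_inv]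
  field_simp

theorem summable_gaussCoeff_mul_pow (habc : ∀ k : ℕ, (k : ℝ) ≠ -a ∧ (k : ℝ) ≠ -b ∧ (k : ℝ) ≠ -c)
    (hx : |x| < 1) :
    Summable fun n => gaussCoeff a b c n * x ^ n := by
  have hx' : x ∈ Metric.eball (0 : ℝ) (ordinaryHypergeometricSeries ℝ a b c).radius := by
    rw [ordinaryHypergeometricSeries_radius_eq_one ℝ a b c habc, Metric.mem_eball,
      edist_zero_right, Real.enorm_eq_ofReal_abs, ENNReal.ofReal_lt_one]
    exact hx
  refine ((ordinaryHypergeometricSeries ℝ a b c).summable hx').congr fun n => ?_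
  rw [ordinaryHypergeometricSeries_apply_eq, smul_eq_mul, gaussCoeff]
  ring

theorem hasDerivAt_GaussF (habc : ∀ k : ℕ, (k : ℝ) ≠ -a ∧ (k : ℝ) ≠ -b ∧ (k : ℝ) ≠ -c)
    (hx : |x| < 1) :
    HasDerivAt (GaussF a b c) (a * b / c * GaussF (a + 1) (b + 1) (c + 1) x) x := by
  have h := hasDerivAt_tsum_mul_pow (fun y hy => summable_gaussCoeff_mul_pow habc hy) hx
  simp only [succ_mul_gaussCoeff_succ, mul_assoc, tsum_mul_left] at h
  exact h

theorem natCast_ne_neg_of_pos (ha : 0 < a) (hb : 0 < b) (hc : 0 < c) (k : ℕ) :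
    (k : ℝ) ≠ -a ∧ (k : ℝ) ≠ -b ∧ (k : ℝ) ≠ -c := by
  have hk := k.cast_nonneg (α := ℝ)
  refine ⟨?_, ?_, ?_⟩ <;> intro h <;> linarith

end Hypergeometric

section LegendreRelation

variable {a x : ℝ}

theorem summable_gaussCoeff_one (ha : a ∈ Set.Ioo 0 1) (hx : |x| < 1) :
    Summable fun n => gaussCoeff a (1 - a) 1 n * x ^ n :=
  summable_gaussCoeff_mul_pow (natCast_ne_neg_of_pos ha.1 (sub_pos.2 ha.2) one_pos) hx

theorem succ_mul_gaussCoeff_one_succ (a : ℝ) (n : ℕ) :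
    (n + 1) * gaussCoeff a (1 - a) 1 (n + 1) =
      a * (1 - a) * gaussCoeff (1 + a) (2 - a) 2 n := by
  rw [succ_mul_gaussCoeff_succ, div_one]
  congr 2 <;> ring

theorem sq_succ_mul_gaussCoeff_one_succ (a : ℝ) (n : ℕ) :
    (n + 1) ^ 2 * gaussCoeff a (1 - a) 1 (n + 1) =
      (n * (n + 1) + a * (1 - a)) * gaussCoeff a (1 - a) 1 n := by
  rw [gaussCoeff_succ]
  field_simp
  ring

theorem hasDerivAt_GaussF_one (ha : a ∈ Set.Ioo 0 1) (hx : |x| < 1) :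
    HasDerivAt (GaussF a (1 - a) 1) (a * (1 - a) * GaussF (1 + a) (2 - a) 2 x) x := by
  convert hasDerivAt_GaussF (natCast_ne_neg_of_pos ha.1 (sub_pos.2 ha.2) one_pos) hx using 2
  · rw [div_one]
  · congr 1 <;> ring

/-- The hypergeometric equation of `F = F(a, 1 - a; 1; ·)`, written with
`θF = x F' = ∑ n cₙ xⁿ` as `(1 - x) (θF)' - θF = a (1 - a) F`. -/
theorem euler_ode_gaussCoeff_one (ha : a ∈ Set.Ioo 0 1) (hx : |x| < 1) :
    (1 - x) * ∑' n : ℕ, (n + 1) * ((n + 1 : ℕ) * gaussCoeff a (1 - a) 1 (n + 1)) * x ^ n -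
      ∑' n : ℕ, n * gaussCoeff a (1 - a) 1 n * x ^ n = a * (1 - a) * GaussF a (1 - a) 1 x := by
  have hs₁ : ∀ y, |y| < 1 → Summable fun n => n * gaussCoeff a (1 - a) 1 n * y ^ n :=
    fun y => summable_natCast_mul_mul_pow fun _ => summable_gaussCoeff_one ha
  have hT := summable_succ_mul_mul_pow hs₁ hx
  have hS := summable_natCast_mul_mul_pow hs₁ hx
  have hshift := tsum_mul_pow_eq_add_mul_tsum_succ hS
  simp only [Nat.cast_zero, zero_mul, zero_add] at hshift
  calc _ = ∑' n : ℕ, ((n + 1) * ((n + 1 : ℕ) * gaussCoeff a (1 - a) 1 (n + 1)) * x ^ n -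
        n * (n * gaussCoeff a (1 - a) 1 n) * x ^ n - n * gaussCoeff a (1 - a) 1 n * x ^ n) := by
        rw [(hT.sub hS).tsum_sub (hs₁ x hx), hT.tsum_sub hS, hshift]
        push_cast
        ring
    _ = ∑' n : ℕ, a * (1 - a) * (gaussCoeff a (1 - a) 1 n * x ^ n) := tsum_congr fun n => by
        push_cast
        linear_combination x ^ n * sq_succ_mul_gaussCoeff_one_succ a n
    _ = a * (1 - a) * GaussF a (1 - a) 1 x := tsum_mul_left

theorem hasDerivAt_mul_one_sub_mul_GaussF_two (ha : a ∈ Set.Ioo 0 1) (hx : |x| < 1) :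
    HasDerivAt (fun y => y * (1 - y) * GaussF (1 + a) (2 - a) 2 y) (GaussF a (1 - a) 1 x) x := by
  set c := gaussCoeff a (1 - a) 1
  have hs₁ : ∀ y, |y| < 1 → Summable fun n => n * c n * y ^ n :=
    fun y => summable_natCast_mul_mul_pow fun _ => summable_gaussCoeff_one ha
  have hθ : ∀ y, |y| < 1 → a * (1 - a) * (y * (1 - y) * GaussF (1 + a) (2 - a) 2 y) =
      (1 - y) * ∑' n, n * c n * y ^ n := by
    intro y hy
    have hg : ∑' n : ℕ, ((n : ℝ) + 1) * c (n + 1) * y ^ n =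
        a * (1 - a) * GaussF (1 + a) (2 - a) 2 y := by
      rw [GaussF_eq_tsum, ← tsum_mul_left]
      exact tsum_congr fun n => by rw [succ_mul_gaussCoeff_one_succ]; ring
    rw [tsum_mul_pow_eq_add_mul_tsum_succ (hs₁ y hy)]
    simp only [Nat.cast_succ, Nat.cast_zero, zero_mul, zero_add, hg]
    ring
  have hne : a * (1 - a) ≠ 0 := (mul_pos ha.1 (sub_pos.2 ha.2)).ne'
  have hderiv := (((hasDerivAt_id x).const_sub 1).mul
    (hasDerivAt_tsum_mul_pow hs₁ hx)).const_mul (a * (1 - a))⁻¹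
  refine (hderiv.congr_of_eventuallyEq ?_).congr_deriv ?_
  · filter_upwards [Ioo_mem_nhds (neg_lt_of_abs_lt hx) (lt_of_abs_lt hx)] with y hy
    simp only [Pi.mul_apply, id]
    rw [← hθ y (abs_lt.2 hy), inv_mul_cancel_left₀ hne]
  · rw [id, inv_mul_eq_iff_eq_mul₀ hne, ← euler_ode_gaussCoeff_one ha hx]
    ring

theorem tendsto_succ_mul_gaussCoeff_one_succ (ha : a ∈ Set.Ioo 0 1) :
    Tendsto (fun n : ℕ => (n + 1) * gaussCoeff a (1 - a) 1 (n + 1)) atTop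
      (𝓝 (Real.sin (π * a) / π)) := by
  have ha' : 0 < 1 - a := sub_pos.2 ha.2
  have hΓ : Gamma a * Gamma (1 - a) ≠ 0 :=
    (mul_pos (Gamma_pos_of_pos ha.1) (Gamma_pos_of_pos ha')).ne'
  have hlim := (tendsto_natCast_div_add_atTop (1 : ℝ)).mul
    (((GammaSeq_tendsto_Gamma a).mul (GammaSeq_tendsto_Gamma (1 - a))).inv₀ hΓ)
  rw [one_mul, Gamma_mul_Gamma_one_sub, inv_div] at hlim
  refine hlim.congr' ?_
  filter_upwards [eventually_ge_atTop 1] with n hn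
  have hn0 : (0 : ℝ) < n := by exact_mod_cast hn
  have hpow : (n : ℝ) ^ a * (n : ℝ) ^ (1 - a) = n := by
    rw [← rpow_add hn0, add_sub_cancel, rpow_one]
  have hprod : GammaSeq a n * GammaSeq (1 - a) n = n * n.factorial ^ 2 /
      ((ascPochhammer ℝ (n + 1)).eval a * (ascPochhammer ℝ (n + 1)).eval (1 - a)) := by
    rw [GammaSeq, GammaSeq, ← ascPochhammer_eval_eq_prod_range,
      ← ascPochhammer_eval_eq_prod_range, div_mul_div_comm, mul_mul_mul_comm, hpow]
    ring
  have := ascPochhammer_pos (n + 1) a ha.1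
  have := ascPochhammer_pos (n + 1) (1 - a) ha'
  rw [hprod, gaussCoeff, ascPochhammer_eval_one, Nat.factorial_succ, Nat.cast_mul, Nat.cast_succ]
  field_simp

theorem tendsto_gaussCoeff_one (ha : a ∈ Set.Ioo 0 1) :
    Tendsto (gaussCoeff a (1 - a) 1) atTop (𝓝 0) := by
  have h := (tendsto_succ_mul_gaussCoeff_one_succ ha).div_atTop
    (tendsto_atTop_add_const_right _ 1 tendsto_natCast_atTop_atTop)
  refine (tendsto_add_atTop_iff_nat 1).1 (h.congr fun n => ?_)
  field_simp

theorem tendsto_one_sub_mul_GaussF_one (ha : a ∈ Set.Ioo 0 1) :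
    Tendsto (fun x => (1 - x) * GaussF a (1 - a) 1 x) (𝓝[<] 1) (𝓝 0) :=
  tendsto_one_sub_mul_tsum_mul_pow (tendsto_gaussCoeff_one ha) fun _ => summable_gaussCoeff_one ha

theorem tendsto_one_sub_mul_GaussF_two (ha : a ∈ Set.Ioo 0 1) :
    Tendsto (fun x => (1 - x) * GaussF (1 + a) (2 - a) 2 x) (𝓝[<] 1)
      (𝓝 (Real.sin (π * a) / (π * a * (1 - a)))) := by
  have hne : a * (1 - a) ≠ 0 := (mul_pos ha.1 (sub_pos.2 ha.2)).ne'
  have hpar : ∀ k : ℕ, (k : ℝ) ≠ -(1 + a) ∧ (k : ℝ) ≠ -(2 - a) ∧ (k : ℝ) ≠ -2 :=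
    natCast_ne_neg_of_pos (by linarith [ha.1]) (by linarith [ha.2]) two_pos
  have hlim := (tendsto_succ_mul_gaussCoeff_one_succ ha).div_const (a * (1 - a))
  simp only [succ_mul_gaussCoeff_one_succ, mul_div_cancel_left₀ _ hne, div_div,
    ← mul_assoc] at hlim
  exact tendsto_one_sub_mul_tsum_mul_pow hlim fun _ => summable_gaussCoeff_mul_pow hpar

/-- `x (1 - x)` times the Wronskian of the solutions `F(x)` and `F(1 - x)` of the hypergeometric
equation of `F = F(a, 1 - a; 1; ·)`, divided by `-a (1 - a)`. -/
noncomputable def legendreWronskian (a x : ℝ) : ℝ :=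
  (1 - x) * x * GaussF (1 + a) (2 - a) 2 (1 - x) * GaussF a (1 - a) 1 x +
    x * (1 - x) * GaussF (1 + a) (2 - a) 2 x * GaussF a (1 - a) 1 (1 - x)

theorem hasDerivAt_legendreWronskian (ha : a ∈ Set.Ioo 0 1) (hx : x ∈ Set.Ioo 0 1) :
    HasDerivAt (legendreWronskian a) 0 x := by
  have hx₁ : |x| < 1 := abs_lt.2 ⟨by linarith [hx.1], hx.2⟩
  have hx₂ : |1 - x| < 1 := abs_lt.2 ⟨by linarith [hx.2], by linarith [hx.1]⟩
  have hflip := (hasDerivAt_id x).const_sub 1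
  have hf := hasDerivAt_GaussF_one ha hx₁
  have hf' := (hasDerivAt_GaussF_one ha hx₂).comp x hflip
  have hh := hasDerivAt_mul_one_sub_mul_GaussF_two ha hx₁
  have hh' := (hasDerivAt_mul_one_sub_mul_GaussF_two ha hx₂).comp x hflip
  refine (((hh'.mul hf).add (hh.mul hf')).congr_of_eventuallyEq
    (.of_forall fun y => ?_)).congr_deriv ?_
  · simp only [legendreWronskian, Function.comp_apply, Pi.mul_apply, Pi.add_apply]
    ring
  · simp only [Function.comp_apply]
    ring

theorem tendsto_legendreWronskian (ha : a ∈ Set.Ioo 0 1) :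
    Tendsto (legendreWronskian a) (𝓝[>] 0) (𝓝 (Real.sin (π * a) / (π * a * (1 - a)))) := by
  have hpar : ∀ k : ℕ, (k : ℝ) ≠ -(1 + a) ∧ (k : ℝ) ≠ -(2 - a) ∧ (k : ℝ) ≠ -2 :=
    natCast_ne_neg_of_pos (by linarith [ha.1]) (by linarith [ha.2]) two_pos
  have h0 : |(0 : ℝ)| < 1 := by simp
  have hflip : Tendsto (fun x : ℝ => 1 - x) (𝓝[>] 0) (𝓝[<] 1) := by
    have h := (map_subLeft_nhdsGT (c := (1 : ℝ)) (a := 0)).le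
    rw [sub_zero] at h
    exact h
  have hlin : Tendsto (fun x : ℝ => 1 - x) (𝓝[>] 0) (𝓝 1) :=
    ((continuous_sub_left 1).tendsto' 0 1 (sub_zero 1)).mono_left nhdsWithin_le_nhds
  have hf₀ : Tendsto (GaussF a (1 - a) 1) (𝓝[>] 0) (𝓝 1) := by
    have h := (hasDerivAt_GaussF_one ha h0).continuousAt.tendsto.mono_left
      (nhdsWithin_le_nhds (s := Set.Ioi 0))
    rwa [GaussF_zero] at h
  have hg₀ : Tendsto (GaussF (1 + a) (2 - a) 2) (𝓝[>] 0) (𝓝 (GaussF (1 + a) (2 - a) 2 0)) :=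
    (hasDerivAt_GaussF hpar h0).continuousAt.tendsto.mono_left nhdsWithin_le_nhds
  have hf₁ := (tendsto_one_sub_mul_GaussF_one ha).comp hflip
  have hg₁ := (tendsto_one_sub_mul_GaussF_two ha).comp hflip
  convert (hg₁.mul (hlin.mul hf₀)).add ((hlin.mul hg₀).mul hf₁) using 2
  · simp only [legendreWronskian, Function.comp_apply]
    ring
  · ring

theorem legendreWronskian_eq (ha : a ∈ Set.Ioo 0 1) (hx : x ∈ Set.Ioo 0 1) :
    legendreWronskian a x = Real.sin (π * a) / (π * a * (1 - a)) := by
  have hconst : ∀ y ∈ Set.Ioo (0 : ℝ) 1, legendreWronskian a y = legendreWronskian a x :=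
    fun y hy => isOpen_Ioo.is_const_of_deriv_eq_zero isPreconnected_Ioo
      (fun z hz => (hasDerivAt_legendreWronskian ha hz).differentiableAt.differentiableWithinAt)
      (fun z hz => (hasDerivAt_legendreWronskian ha hz).deriv) hy hx
  refine tendsto_nhds_unique (tendsto_const_nhds.congr' ?_) (tendsto_legendreWronskian ha)
  filter_upwards [Ioo_mem_nhdsGT (zero_lt_one' ℝ)] with y hy using (hconst y hy).symm

end LegendreRelation

theorem hypergeometric_identity (a r : ℝ) (ha : a ∈ Set.Ioo (0:ℝ) 1)
    (hr : r ∈ Set.Ioo (0:ℝ) 1) :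
    GaussF (1+a) (2-a) 2 (1-r) * GaussF a (1-a) 1 r +
      GaussF (1+a) (2-a) 2 r * GaussF a (1-a) 1 (1-r) =
    Real.sin (Real.pi * a) / (Real.pi * a * (1-a) * r * (1-r)) := by
  have h := legendreWronskian_eq ha hr
  have hK : π * a * (1 - a) ≠ 0 := (mul_pos (mul_pos pi_pos ha.1) (sub_pos.2 ha.2)).ne'
  rw [legendreWronskian, eq_div_iff hK] at h
  rw [eq_div_iff (mul_ne_zero (mul_ne_zero hK hr.1.ne') (sub_pos.2 hr.2).ne')]
  linear_combination h
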